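/- arXiv:1203.4748 — 2 statements merged into one kernel-verified Lean document; each statement's English description precedes it below -/
import Mathlib

section
/- Let G be a topological group and n ≥ 0 an integer. Suppose that for every commuting n-tuple (x₁,…,xₙ) ∈ Hom(ℤⁿ, G) the centralizer Z_G(x₁,…,xₙ) is path-connected. Then Hom(ℤⁿ⁺¹, G) is path-connected. -/
/-!
Every commuting tuple `x` can be contracted to the trivial tuple one coordinate at a time: the
coordinate `xᵢ` lies in the centralizer of the remaining `n` coordinates, which is path-connected
by hypothesis and contains `1`, and moving `xᵢ` to `1` inside that centralizer keeps the tuple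
commuting.
-/

/-- The space `Hom(ℤⁿ, G)` of commuting `n`-tuples in `G`, viewed as a subset of `Gⁿ`
(with the subspace topology coming from the product topology on `Fin n → G`). -/
def commutingTuples (G : Type*) [Group G] (n : ℕ) : Set (Fin n → G) :=
  {x | ∀ i j, Commute (x i) (x j)}

/-- The centralizer `Z_G(x₁, …, xₙ) = {g ∈ G : g xᵢ = xᵢ g for all i}` of a tuple of
elements of `G`, as a subset of `G` (with the subspace topology). -/
def tupleCentralizer {G : Type*} [Group G] {n : ℕ} (x : Fin n → G) : Set G :=
  {g | ∀ i, g * x i = x i * g}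

theorem isPathConnected_of_joinedIn_update_one {ι M : Type*} [Fintype ι] [DecidableEq ι]
    [One M] [TopologicalSpace M] {F : Set (ι → M)} (h₁ : 1 ∈ F)
    (hF : ∀ x ∈ F, ∀ i, JoinedIn F x (Function.update x i 1)) : IsPathConnected F := by
  have joined_one : ∀ s : Finset ι, ∀ x ∈ F, (∀ j ∉ s, x j = 1) → JoinedIn F x 1 := by
    intro s
    induction s using Finset.induction_on with
    | empty =>
      intro x hx hx₁
      obtain rfl : x = 1 := funext fun j => hx₁ j (Finset.notMem_empty j)
      exact JoinedIn.refl hx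
    | insert i s _ ih =>
      intro x hx hx₁
      refine (hF x hx i).trans (ih _ (hF x hx i).mem.2 fun j hj => ?_)
      rcases eq_or_ne j i with rfl | hji
      · exact Function.update_self ..
      · rw [Function.update_of_ne hji]
        exact hx₁ j (by simp [hji, hj])
  refine ⟨1, h₁, fun {x} hx => (joined_one Finset.univ x hx fun j hj => ?_).symm⟩
  exact absurd (Finset.mem_univ j) hj

section

variable {G : Type*} [Group G] {n : ℕ}

theorem one_mem_commutingTuples : (1 : Fin n → G) ∈ commutingTuples G n :=
  fun _ _ => Commute.one_left _

theorem one_mem_tupleCentralizer (x : Fin n → G) : (1 : G) ∈ tupleCentralizer x :=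
  fun _ => by simp

theorem removeNth_mem_commutingTuples {x : Fin (n + 1) → G} (hx : x ∈ commutingTuples G (n + 1))
    (i : Fin (n + 1)) : i.removeNth x ∈ commutingTuples G n :=
  fun _ _ => hx _ _

theorem apply_mem_tupleCentralizer_removeNth {x : Fin (n + 1) → G}
    (hx : x ∈ commutingTuples G (n + 1)) (i : Fin (n + 1)) :
    x i ∈ tupleCentralizer (i.removeNth x) :=
  fun _ => hx _ _

theorem update_mem_commutingTuples {x : Fin (n + 1) → G}
    (hx : x ∈ commutingTuples G (n + 1)) {i : Fin (n + 1)} {g : G}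
    (hg : g ∈ tupleCentralizer (i.removeNth x)) :
    Function.update x i g ∈ commutingTuples G (n + 1) := by
  have hg_comm : ∀ j ≠ i, Commute g (x j) := fun j hj => by
    obtain ⟨k, rfl⟩ := Fin.exists_succAbove_eq hj
    exact hg k
  intro j k
  rcases eq_or_ne j i with rfl | hj <;> rcases eq_or_ne k j with rfl | hk
  · exact Commute.refl _
  · simpa [Function.update_of_ne hk] using hg_comm k hk
  · exact Commute.refl _
  rcases eq_or_ne k i with rfl | hki
  · simpa [Function.update_of_ne hj] using (hg_comm j hj).symm
  · simpa [Function.update_of_ne hj, Function.update_of_ne hki] using hx j k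

theorem joinedIn_update_of_joinedIn_tupleCentralizer [TopologicalSpace G]
    {x : Fin (n + 1) → G} (hx : x ∈ commutingTuples G (n + 1)) {i : Fin (n + 1)} {g : G}
    (hg : JoinedIn (tupleCentralizer (i.removeNth x)) (x i) g) :
    JoinedIn (commutingTuples G (n + 1)) x (Function.update x i g) := by
  have hmap := hg.map (continuous_const.update i continuous_id : Continuous (Function.update x i))
  rw [Function.update_eq_self] at hmap
  refine hmap.mono ?_
  rintro _ ⟨h, hh, rfl⟩
  exact update_mem_commutingTuples hx hh

end

theorem commutingTuples_pathConnected_of_centralizers_pathConnected_general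
    {G : Type*} [Group G] [TopologicalSpace G] (n : ℕ)
    (h : ∀ x ∈ commutingTuples G n, IsPathConnected (tupleCentralizer x)) :
    IsPathConnected (commutingTuples G (n + 1)) := by
  refine isPathConnected_of_joinedIn_update_one one_mem_commutingTuples fun x hx i => ?_
  refine joinedIn_update_of_joinedIn_tupleCentralizer hx ?_
  exact (h _ (removeNth_mem_commutingTuples hx i)).joinedIn _
    (apply_mem_tupleCentralizer_removeNth hx i) _ (one_mem_tupleCentralizer _)

/-- Let `G` be a topological group and `n ≥ 0`.  If for every commuting `n`-tuple
`(x₁, …, xₙ) ∈ Hom(ℤⁿ, G)` the centralizer `Z_G(x₁, …, xₙ)` is path-connected, then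
`Hom(ℤⁿ⁺¹, G)` is path-connected.  (The converse direction of Example 2.3.) -/
theorem commutingTuples_pathConnected_of_centralizers_pathConnected
    {G : Type*} [Group G] [TopologicalSpace G] [IsTopologicalGroup G] (n : ℕ)
    (h : ∀ x ∈ commutingTuples G n, IsPathConnected (tupleCentralizer x)) :
    IsPathConnected (commutingTuples G (n + 1)) :=
  commutingTuples_pathConnected_of_centralizers_pathConnected_general n h
end

section
/- Let W be a finite group and 𝒲 a set of subgroups of W. For each H ∈ 𝒲, let T_H ⊆ W be a left-coset transversal for H, i.e., every left coset wH contains exactly one element of T_H. Assume: (a) whenever H, H′ ∈ 𝒲 and H ⊆ H′, then T_{H′} ⊆ T_H; (b) for all H, H′ ∈ 𝒲 there exists H″ ∈ 𝒲 with H ∪ H′ ⊆ H″ and T_{H″} = T_H ∩ T_{H′}; (c) the union of the T_H over H ∈ 𝒲 is all of W. For H ∈ 𝒲, set C_H = T_H ∖ ⋃ {T_{H′} : H′ ∈ 𝒲, H ⊊ H′}. Then the sets C_H, H ∈ 𝒲, are pairwise disjoint and their union is W; moreover, for every H ∈ 𝒲, T_H = ⋃ {C_{H′} : H′ ∈ 𝒲,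 H ⊆ H′}. -/
/-- Given a family `𝒲` of subgroups of `W` and a choice `T H` of a left-coset transversal
for each subgroup `H`, the cell `C H` is the set of elements of `T H` that do not lie in
`T H'` for any strictly larger member `H'` of the family. -/
def transversalCell {W : Type*} [Group W] (𝒲 : Set (Subgroup W)) (T : Subgroup W → Set W)
    (H : Subgroup W) : Set W :=
  T H \ ⋃ H' ∈ 𝒲, ⋃ (_ : H < H'), T H'

/-!
For `w ∈ W`, the members of `𝒲` whose transversal contains `w` form a nonempty (by (c)) and
upward directed (by (b)) family in the finite lattice of subgroups, so they have a greatest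
element `M w`. Property (b) also shows that `w` lies in the cell `C H` exactly when `H = M w`.
Hence every `w` lies in exactly one cell, and `w ∈ T H` iff `H ≤ M w`, by (a) for the converse.
-/

open Set

theorem DirectedOn.exists_isGreatest_of_finite {α : Type*} [Preorder α] {s : Set α}
    (hd : DirectedOn (· ≤ ·) s) (hfin : s.Finite) (hne : s.Nonempty) : ∃ a, IsGreatest s a := by
  obtain ⟨a, has, hmax⟩ := hfin.exists_maximal hne
  refine ⟨a, has, fun b hbs => ?_⟩
  obtain ⟨c, hcs, hac, hbc⟩ := hd a has b hbs
  exact hbc.trans (hmax hcs hac)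

def transversalsContaining {W : Type*} [Group W] (𝒲 : Set (Subgroup W))
    (T : Subgroup W → Set W) (w : W) : Set (Subgroup W) :=
  {H | H ∈ 𝒲 ∧ w ∈ T H}

section

variable {W : Type*} [Group W] {𝒲 : Set (Subgroup W)} {T : Subgroup W → Set W}

theorem directedOn_transversalsContaining
    (hb : ∀ H ∈ 𝒲, ∀ H' ∈ 𝒲, ∃ H'' ∈ 𝒲, H ≤ H'' ∧ H' ≤ H'' ∧ T H'' = T H ∩ T H') (w : W) :
    DirectedOn (· ≤ ·) (transversalsContaining 𝒲 T w) := by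
  rintro H ⟨hH, hwH⟩ H' ⟨hH', hwH'⟩
  obtain ⟨H'', hH'', hle, hle', hT⟩ := hb H hH H' hH'
  exact ⟨H'', ⟨hH'', hT ▸ ⟨hwH, hwH'⟩⟩, hle, hle'⟩

theorem exists_isGreatest_transversalsContaining [Finite W]
    (hb : ∀ H ∈ 𝒲, ∀ H' ∈ 𝒲, ∃ H'' ∈ 𝒲, H ≤ H'' ∧ H' ≤ H'' ∧ T H'' = T H ∩ T H')
    (hc : (⋃ H ∈ 𝒲, T H) = univ) (w : W) :
    ∃ M, IsGreatest (transversalsContaining 𝒲 T w) M := by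
  have hw : w ∈ ⋃ H ∈ 𝒲, T H := hc ▸ mem_univ w
  obtain ⟨H, hH, hwH⟩ := mem_iUnion₂.1 hw
  exact (directedOn_transversalsContaining hb w).exists_isGreatest_of_finite
    (toFinite _) ⟨H, hH, hwH⟩

theorem mem_transversalCell_of_isGreatest {w : W} {M : Subgroup W}
    (hM : IsGreatest (transversalsContaining 𝒲 T w) M) : w ∈ transversalCell 𝒲 T M := by
  refine ⟨hM.1.2, ?_⟩
  simp only [mem_iUnion, not_exists]
  exact fun H' hH' hlt hwH' => hlt.not_ge (hM.2 ⟨hH', hwH'⟩)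

theorem isGreatest_of_mem_transversalCell
    (hb : ∀ H ∈ 𝒲, ∀ H' ∈ 𝒲, ∃ H'' ∈ 𝒲, H ≤ H'' ∧ H' ≤ H'' ∧ T H'' = T H ∩ T H')
    {w : W} {H : Subgroup W} (hH : H ∈ 𝒲) (hw : w ∈ transversalCell 𝒲 T H) :
    IsGreatest (transversalsContaining 𝒲 T w) H := by
  obtain ⟨hwH, hnot⟩ := hw
  simp only [mem_iUnion, not_exists] at hnot
  refine ⟨⟨hH, hwH⟩, fun H' ⟨hH', hwH'⟩ => ?_⟩
  obtain ⟨H'', hH'', hle, hle', hT⟩ := hb H hH H' hH'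
  have hwH'' : w ∈ T H'' := hT ▸ ⟨hwH, hwH'⟩
  have hH_eq : H = H'' := by_contra fun hne => hnot H'' hH'' (hle.lt_of_ne hne) hwH''
  exact hH_eq ▸ hle'

end

theorem transversalCell_partition_general
    {W : Type*} [Group W] [Finite W] (𝒲 : Set (Subgroup W)) (T : Subgroup W → Set W)
    (ha : ∀ H ∈ 𝒲, ∀ H' ∈ 𝒲, H ≤ H' → T H' ⊆ T H)
    (hb : ∀ H ∈ 𝒲, ∀ H' ∈ 𝒲, ∃ H'' ∈ 𝒲, H ≤ H'' ∧ H' ≤ H'' ∧ T H'' = T H ∩ T H')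
    (hc : (⋃ H ∈ 𝒲, T H) = Set.univ) :
    (∀ H ∈ 𝒲, ∀ H' ∈ 𝒲, H ≠ H' →
        Disjoint (transversalCell 𝒲 T H) (transversalCell 𝒲 T H')) ∧
      (⋃ H ∈ 𝒲, transversalCell 𝒲 T H) = Set.univ ∧
      (∀ H ∈ 𝒲, T H = ⋃ H' ∈ 𝒲, ⋃ (_ : H ≤ H'), transversalCell 𝒲 T H') := by
  refine ⟨fun H hH H' hH' hne => ?_, ?_, fun H hH => ?_⟩
  · exact disjoint_left.2 fun w hw hw' => hne <|
      (isGreatest_of_mem_transversalCell hb hH hw).unique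
        (isGreatest_of_mem_transversalCell hb hH' hw')
  · refine eq_univ_of_forall fun w => ?_
    obtain ⟨M, hM⟩ := exists_isGreatest_transversalsContaining hb hc w
    exact mem_iUnion₂.2 ⟨M, hM.1.1, mem_transversalCell_of_isGreatest hM⟩
  · ext w
    simp only [mem_iUnion]
    constructor
    · intro hwH
      obtain ⟨M, hM⟩ := exists_isGreatest_transversalsContaining hb hc w
      exact ⟨M, hM.1.1, hM.2 ⟨hH, hwH⟩, mem_transversalCell_of_isGreatest hM⟩
    · rintro ⟨H', hH', hle, hwH', -⟩
      exact ha H hH H' hH' hle hwH'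

/-- Let `W` be a finite group and `𝒲` a set of subgroups of `W`; for each `H ∈ 𝒲` let
`T H` be a left-coset transversal for `H` (every left coset `wH` contains exactly one
element of `T H`).  Assume (a) if `H ⊆ H'` (both in `𝒲`) then `T H' ⊆ T H`; (b) for all
`H, H' ∈ 𝒲` there is `H'' ∈ 𝒲` containing `H ∪ H'` with `T H'' = T H ∩ T H'` (the coset
intersection property); (c) the union of the `T H`, `H ∈ 𝒲`, is all of `W`.  Then the
cells `C H = T H \ ⋃ {T H' : H ⊊ H'}`, `H ∈ 𝒲`, are pairwise disjoint, their union is `W`,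
and for every `H ∈ 𝒲`, `T H = ⋃ {C H' : H' ∈ 𝒲, H ⊆ H'}`.  (Section 3.) -/
theorem transversalCell_partition
    {W : Type*} [Group W] [Finite W] (𝒲 : Set (Subgroup W)) (T : Subgroup W → Set W)
    (htrans : ∀ H ∈ 𝒲, ∀ w : W, ∃! t : W, t ∈ T H ∧ w⁻¹ * t ∈ H)
    (ha : ∀ H ∈ 𝒲, ∀ H' ∈ 𝒲, H ≤ H' → T H' ⊆ T H)
    (hb : ∀ H ∈ 𝒲, ∀ H' ∈ 𝒲, ∃ H'' ∈ 𝒲, H ≤ H'' ∧ H' ≤ H'' ∧ T H'' = T H ∩ T H')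
    (hc : (⋃ H ∈ 𝒲, T H) = Set.univ) :
    (∀ H ∈ 𝒲, ∀ H' ∈ 𝒲, H ≠ H' →
        Disjoint (transversalCell 𝒲 T H) (transversalCell 𝒲 T H')) ∧
      (⋃ H ∈ 𝒲, transversalCell 𝒲 T H) = Set.univ ∧
      (∀ H ∈ 𝒲, T H = ⋃ H' ∈ 𝒲, ⋃ (_ : H ≤ H'), transversalCell 𝒲 T H') :=
  transversalCell_partition_general 𝒲 T ha hb hc
end
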